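/- arXiv:2511.22092 — 5 statements merged into one kernel-verified Lean document; each statement's English description precedes it below -/
import Mathlib

section
/- Let σ ⊆ ℕ^2 be a connected skew shape and let r = (r₁,r₂), s = (s₁,s₂) ∈ σ with r₁ ≤ s₁ and r₂ ≤ s₂. Then there exists a northeast lattice path from r to s lying entirely within σ and within the rectangle {v : r ≤ v ≤ s}; that is, a sequence r = v₀, v₁, ..., v_p = s with each v_j ∈ σ, r ≤ v_j ≤ s, and v_j − v_{j−1} ∈ {e₁, e₂} for all j. -/
/-- A standard shape in ℕ²: a finite downward-closed subset. -/
def IsStandardShape2 (σ : Set (ℕ × ℕ)) : Prop :=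
  σ.Finite ∧ ∀ v ∈ σ, ∀ w, w ≤ v → w ∈ σ

/-- A skew shape in ℕ²: a difference of two standard shapes. -/
def IsSkewShape2 (σ : Set (ℕ × ℕ)) : Prop :=
  ∃ τ ρ, IsStandardShape2 τ ∧ IsStandardShape2 ρ ∧ σ = τ \ ρ

/-- A lattice step: difference in {±e₁, ±e₂}. -/
def IsStep (v w : ℕ × ℕ) : Prop :=
  w = v + (1, 0) ∨ w = v + (0, 1) ∨ v = w + (1, 0) ∨ v = w + (0, 1)

/-- A subset of ℕ² is connected if any two of its points are joined by a lattice
path within it. -/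
def IsConnectedShape2 (σ : Set (ℕ × ℕ)) : Prop :=
  ∀ v ∈ σ, ∀ w ∈ σ, ∃ (m : ℕ) (f : ℕ → ℕ × ℕ), f 0 = v ∧ f m = w ∧
    (∀ i ≤ m, f i ∈ σ) ∧ ∀ i < m, IsStep (f i) (f (i + 1))

theorem northeast_path_in_rectangle {σ : Set (ℕ × ℕ)}
    (hskew : IsSkewShape2 σ) (hconn : IsConnectedShape2 σ)
    {r s : ℕ × ℕ} (hr : r ∈ σ) (hs : s ∈ σ) (hrs : r ≤ s) :
    ∃ (p : ℕ) (v : ℕ → ℕ × ℕ), v 0 = r ∧ v p = s ∧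
      (∀ j ≤ p, v j ∈ σ ∧ r ≤ v j ∧ v j ≤ s) ∧
      (∀ j < p, v (j + 1) = v j + (1, 0) ∨ v (j + 1) = v j + (0, 1)) := by
  obtain ⟨τ, ρ, ⟨_, hτ⟩, ⟨_, hρ⟩, hσ⟩ := hskew
  -- the whole rectangle [r, s] is contained in σ
  have hrect : ∀ w : ℕ × ℕ, r ≤ w → w ≤ s → w ∈ σ := by
    intro w h1 h2
    rw [hσ]
    refine ⟨hτ s (hσ ▸ hs).1 w h2, fun hw => (hσ ▸ hr).2 (hρ w hw r h1)⟩
  obtain ⟨h1, h2⟩ := hrs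
  set a := s.1 - r.1 with ha
  set b := s.2 - r.2 with hb
  refine ⟨a + b, fun j => (r.1 + min j a, r.2 + (j - a)), ?_, ?_, ?_, ?_⟩
  · simp
  · exact Prod.ext (by simp; omega) (by simp; omega)
  · intro j hj
    have hle : r ≤ (r.1 + min j a, r.2 + (j - a)) := ⟨by simp, by simp⟩
    have hle2 : (r.1 + min j a, r.2 + (j - a)) ≤ s := ⟨by simp; omega, by simp; omega⟩
    exact ⟨hrect _ hle hle2, hle, hle2⟩
  · intro j hj
    rcases lt_or_ge j a with h | h
    · left
      exact Prod.ext (by simp; omega) (by simp; omega)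
    · right
      exact Prod.ext (by simp; omega) (by simp; omega)
end

section
/- Let r = (r₁,r₂) ≤ s = (s₁,s₂) in ℕ^2 and let R = {v : r ≤ v ≤ s} be the rectangle they define. Let v₀, ..., v_p ∈ R be a northeast path (consecutive differences in {e₁, e₂}) with first coordinate of v₀ equal to r₁ and first coordinate of v_p equal to s₁, and let w₀, ..., w_q ∈ R be an arbitrary lattice path (consecutive differences in {±e₁, ±e₂}) with second coordinate of w₀ equal to r₂ and second coordinate of w_q equal to s₂. Then the two paths intersect: {v₀,...,v_p} ∩ {w₀,...,w_q} ≠ ∅. -/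
private lemma ivt_nat (f : ℕ → ℕ) (y a : ℕ) : ∀ b, a ≤ b →
    (∀ i, a ≤ i → i < b → f (i + 1) ≤ f i + 1) → f a ≤ y → y ≤ f b →
    ∃ i, a ≤ i ∧ i ≤ b ∧ f i = y := by
  intro b
  induction b with
  | zero =>
    intro hab _ h1 h2
    obtain rfl : a = 0 := by omega
    exact ⟨0, le_rfl, le_rfl, le_antisymm h1 h2⟩
  | succ b ih =>
    intro hab hstep h1 h2
    rcases Nat.lt_or_ge a (b + 1) with hab' | hab'
    · have hab'' : a ≤ b := by omega
      by_cases hy : y ≤ f b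
      · obtain ⟨i, h3, h4, h5⟩ := ih hab'' (fun i hi1 hi2 => hstep i hi1 (by omega)) h1 hy
        exact ⟨i, h3, by omega, h5⟩
      · have hb : f (b + 1) ≤ f b + 1 := hstep b hab'' (by omega)
        exact ⟨b + 1, by omega, le_rfl, by omega⟩
    · obtain rfl : a = b + 1 := by omega
      exact ⟨b + 1, le_rfl, le_rfl, le_antisymm h1 h2⟩

private lemma mono_aux (f : ℕ → ℕ) (p : ℕ) (h : ∀ i < p, f i ≤ f (i + 1)) :
    ∀ i i', i ≤ i' → i' ≤ p → f i ≤ f i' := by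
  intro i i' h1
  induction i', h1 using Nat.le_induction with
  | base => intro _; exact le_rfl
  | succ n hn ih =>
    intro hnp
    exact le_trans (ih (by omega)) (h n (by omega))

theorem paths_cross {r s : ℕ × ℕ} (hrs : r ≤ s)
    {p q : ℕ} {v w : ℕ → ℕ × ℕ}
    (hvR : ∀ i ≤ p, r ≤ v i ∧ v i ≤ s)
    (hvNE : ∀ i < p, v (i + 1) = v i + (1, 0) ∨ v (i + 1) = v i + (0, 1))
    (hv0 : (v 0).1 = r.1) (hvp : (v p).1 = s.1)
    (hwR : ∀ j ≤ q, r ≤ w j ∧ w j ≤ s)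
    (hwStep : ∀ j < q, w (j + 1) = w j + (1, 0) ∨ w (j + 1) = w j + (0, 1) ∨
      w j = w (j + 1) + (1, 0) ∨ w j = w (j + 1) + (0, 1))
    (hw0 : (w 0).2 = r.2) (hwq : (w q).2 = s.2) :
    ∃ i ≤ p, ∃ j ≤ q, v i = w j := by
  -- componentwise descriptions of steps of v
  have hstep : ∀ i < p, ((v (i+1)).1 = (v i).1 + 1 ∧ (v (i+1)).2 = (v i).2) ∨
      ((v (i+1)).1 = (v i).1 ∧ (v (i+1)).2 = (v i).2 + 1) := by
    intro i hi
    rcases hvNE i hi with h | h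
    · left; constructor <;> simp [h]
    · right; constructor <;> simp [h]
  have hv1step : ∀ i < p, (v (i+1)).1 ≤ (v i).1 + 1 := by
    intro i hi; rcases hstep i hi with ⟨h1, _⟩ | ⟨h1, _⟩ <;> omega
  have hv2step : ∀ i < p, (v (i+1)).2 ≤ (v i).2 + 1 := by
    intro i hi; rcases hstep i hi with ⟨_, h2⟩ | ⟨_, h2⟩ <;> omega
  have hv1mono : ∀ i i', i ≤ i' → i' ≤ p → (v i).1 ≤ (v i').1 := by
    apply mono_aux
    intro i hi; rcases hstep i hi with ⟨h1, _⟩ | ⟨h1, _⟩ <;> omega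
  have hv2mono : ∀ i i', i ≤ i' → i' ≤ p → (v i).2 ≤ (v i').2 := by
    apply mono_aux
    intro i hi; rcases hstep i hi with ⟨_, h2⟩ | ⟨_, h2⟩ <;> omega
  -- bounds from the rectangle
  have hvb : ∀ i ≤ p, r.1 ≤ (v i).1 ∧ r.2 ≤ (v i).2 ∧ (v i).1 ≤ s.1 ∧ (v i).2 ≤ s.2 := by
    intro i hi
    obtain ⟨h1, h2⟩ := hvR i hi
    rw [Prod.le_def] at h1 h2
    exact ⟨h1.1, h1.2, h2.1, h2.2⟩
  have hwb : ∀ j ≤ q, r.1 ≤ (w j).1 ∧ r.2 ≤ (w j).2 ∧ (w j).1 ≤ s.1 ∧ (w j).2 ≤ s.2 := by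
    intro j hj
    obtain ⟨h1, h2⟩ := hwR j hj
    rw [Prod.le_def] at h1 h2
    exact ⟨h1.1, h1.2, h2.1, h2.2⟩
  -- the "last index of v in column x"
  set I : ℕ → ℕ := fun x => Nat.findGreatest (fun i => (v i).1 ≤ x) p with hIdef
  set M : ℕ → ℕ := fun x => (v (I x)).2 with hMdef
  have hIle : ∀ x, I x ≤ p := fun x => Nat.findGreatest_le p
  have hIcol : ∀ x, r.1 ≤ x → x ≤ s.1 → (v (I x)).1 = x := by
    intro x hx1 hx2
    have hP0 : (v 0).1 ≤ x := by rw [hv0]; exact hx1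
    have hspec : (v (I x)).1 ≤ x :=
      Nat.findGreatest_spec (P := fun i => (v i).1 ≤ x) (m := 0) (n := p) (Nat.zero_le p) hP0
    rcases Nat.lt_or_ge (I x) p with hlt | hge
    · have hgr : ¬ ((v (I x + 1)).1 ≤ x) :=
        Nat.findGreatest_is_greatest (P := fun i => (v i).1 ≤ x) (n := p)
          (Nat.lt_succ_self (I x)) (by omega)
      have hs1 := hv1step (I x) hlt
      omega
    · have : I x = p := le_antisymm (hIle x) hge
      rw [this] at hspec ⊢
      omega
  -- indices attaining heights, monotone
  have hImono : ∀ x x', r.1 ≤ x → x ≤ x' → x' ≤ s.1 → I x ≤ I x' := by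
    intro x x' hx1 hxx hx2
    exact Nat.le_findGreatest (hIle x) (by rw [hIcol x hx1 (le_trans hxx hx2)]; exact hxx)
  have hMmono : ∀ x x', r.1 ≤ x → x ≤ x' → x' ≤ s.1 → M x ≤ M x' := by
    intro x x' hx1 hxx hx2
    exact hv2mono (I x) (I x') (hImono x x' hx1 hxx hx2) (hIle x')
  -- mid-height points of a column are on the path
  have honpath : ∀ x y, r.1 ≤ x → x + 1 ≤ s.1 → M x < y → y ≤ M (x + 1) →
      ∃ i ≤ p, v i = (x + 1, y) := by
    intro x y hx1 hx2 hy1 hy2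
    set a := I x with ha
    have hax : (v a).1 = x := hIcol x hx1 (by omega)
    have hap : a < p := by
      rcases Nat.lt_or_ge a p with h | h
      · exact h
      · have : a = p := le_antisymm (hIle x) h
        rw [this] at hax; omega
    -- the step at a must be an e₁ step
    have hgr : ¬ ((v (a + 1)).1 ≤ x) :=
      Nat.findGreatest_is_greatest (P := fun i => (v i).1 ≤ x) (n := p)
        (Nat.lt_succ_self a) (by omega)
    have hstepa : (v (a+1)).1 = (v a).1 + 1 ∧ (v (a+1)).2 = (v a).2 := by
      rcases hstep a hap with h | h
      · exact h
      · exfalso; exact hgr (by omega)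
    -- so v (a+1) = (x+1, M x)
    have hva1 : (v (a+1)).1 = x + 1 := by omega
    have hva2 : (v (a+1)).2 = M x := hstepa.2
    -- the end of the column x+1
    have hb : (v (I (x+1))).1 = x + 1 := hIcol (x+1) (by omega) hx2
    have hab : a + 1 ≤ I (x+1) :=
      Nat.le_findGreatest (P := fun i => (v i).1 ≤ x + 1) (by omega) (by omega)
    obtain ⟨i, hi1, hi2, hi3⟩ := ivt_nat (fun i => (v i).2) y (a+1) (I (x+1)) hab
      (fun i _ hi => hv2step i (by have := hIle (x+1); omega))
      (by show (v (a+1)).2 ≤ y; omega) (by show y ≤ (v (I (x+1))).2; exact hy2)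
    have hip : i ≤ p := le_trans hi2 (hIle (x+1))
    have hifst : (v i).1 = x + 1 := by
      have h1 := hv1mono (a+1) i hi1 hip
      have h2 := hv1mono i (I (x+1)) hi2 (hIle (x+1))
      omega
    exact ⟨i, hip, Prod.ext hifst (show (v i).2 = y from hi3)⟩
  -- the "below" predicate on w
  set B : ℕ → Prop := fun j => (w j).2 ≤ M ((w j).1) with hBdef
  have hB0 : B 0 := by
    have h0 := hwb 0 (Nat.zero_le q)
    have hI0 := hvb (I ((w 0).1)) (hIle _)
    simp only [hBdef]
    rw [hw0]
    exact hI0.2.1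
  by_cases hBq : B q
  · -- w q is on the path
    have hq := hwb q le_rfl
    have hIq := hvb (I ((w q).1)) (hIle _)
    have hcol : (v (I ((w q).1))).1 = (w q).1 := hIcol _ hq.1 hq.2.2.1
    have hMq : M ((w q).1) = s.2 := by
      simp only [hBdef] at hBq
      simp only [hMdef] at *
      omega
    refine ⟨I ((w q).1), hIle _, q, le_rfl, Prod.ext hcol ?_⟩
    simp only [hMdef] at hMq
    omega
  · -- find the last j with B j
    have hdec : DecidablePred B := fun j => by
      simp only [hBdef]; infer_instance
    set j := @Nat.findGreatest B hdec q with hjdef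
    have hjq : j ≤ q := Nat.findGreatest_le q
    have hBj : B j := @Nat.findGreatest_spec 0 B hdec q (Nat.zero_le q) hB0
    have hjlt : j < q := by
      rcases Nat.lt_or_ge j q with h | h
      · exact h
      · exact absurd (le_antisymm hjq h ▸ hBj) hBq
    have hnBj1 : ¬ B (j + 1) := by
      exact @Nat.findGreatest_is_greatest (j+1) B hdec q (Nat.lt_succ_self j) (by omega)
    have hwj := hwb j (by omega)
    have hwj1 := hwb (j+1) (by omega)
    simp only [hBdef] at hBj hnBj1
    push_neg at hnBj1
    rcases hwStep j hjlt with h | h | h | h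
    · -- e₁ step: impossible
      exfalso
      have h1 : (w (j+1)).1 = (w j).1 + 1 := by simp [h]
      have h2 : (w (j+1)).2 = (w j).2 := by simp [h]
      have hm := hMmono ((w j).1) ((w j).1 + 1) hwj.1 (by omega) (by rw [← h1]; exact hwj1.2.2.1)
      rw [h1, h2] at hnBj1
      omega
    · -- e₂ step: w j is on path
      have h1 : (w (j+1)).1 = (w j).1 := by simp [h]
      have h2 : (w (j+1)).2 = (w j).2 + 1 := by simp [h]
      rw [h1, h2] at hnBj1
      have heq : (w j).2 = M ((w j).1) := by omega
      have hcol : (v (I ((w j).1))).1 = (w j).1 := hIcol _ hwj.1 hwj.2.2.1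
      exact ⟨I ((w j).1), hIle _, j, by omega, Prod.ext hcol (by simp only [hMdef] at heq; omega)⟩
    · -- -e₁ step: w j is on path by IVT
      have h1 : (w j).1 = (w (j+1)).1 + 1 := by simp [h]
      have h2 : (w j).2 = (w (j+1)).2 := by simp [h]
      obtain ⟨i, hip, hvi⟩ := honpath ((w (j+1)).1) ((w j).2) hwj1.1
        (by rw [← h1]; exact hwj.2.2.1) (by omega) (by rw [← h1]; exact hBj)
      have e1 : (v i).1 = (w (j+1)).1 + 1 := by rw [hvi]
      have e2 : (v i).2 = (w j).2 := by rw [hvi]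
      exact ⟨i, hip, j, by omega, Prod.ext (by omega) (by omega)⟩
    · -- -e₂ step: impossible
      exfalso
      have h1 : (w j).1 = (w (j+1)).1 := by simp [h]
      have h2 : (w j).2 = (w (j+1)).2 + 1 := by simp [h]
      rw [← h1] at hnBj1
      omega
end

section
/- There exist four pairwise commuting 4×4 matrices A₁, A₂, A₃, A₄ over a field k such that the unital k-algebra they generate has dimension 5 > 4. Concretely, taking A₁ = E₁₃, A₂ = E₁₄, A₃ = E₂₃, A₄ = E₂₄ (standard matrix units), these matrices pairwise commute and dim_k k[E₁₃, E₁₄, E₂₃, E₂₄] = 5. -/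
open Matrix Submodule

/-!
If the matrix units `E_ij`, `(i, j) ∈ P`, satisfy `j ≠ i'` for all `(i, j), (i', j') ∈ P`,
then all their products vanish. Hence the algebra they generate is spanned by `1` and these units,
which are linearly independent, so it has dimension `|P| + 1`. For `n = 4` and
`P = {0, 1} × {2, 3}` (Schur's construction) this gives a commutative subalgebra of dimension
`5 > 4`.
-/

section

variable {R A : Type*} [CommSemiring R] [Semiring A] [Algebra R A] {s : Set A}

theorem Submodule.span_insert_one_mul_le_of_mul_eq_zero (hs : ∀ a ∈ s, ∀ b ∈ s, a * b = 0) :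
    span R (insert 1 s) * span R (insert 1 s) ≤ span R (insert 1 s) := by
  rw [span_mul_span, span_le]
  rintro _ ⟨a, ha, b, hb, rfl⟩
  rcases ha with rfl | ha
  · simpa using subset_span hb
  rcases hb with rfl | hb
  · simpa using subset_span (Set.mem_insert_of_mem 1 ha)
  · simp [hs a ha b hb]

theorem Algebra.toSubmodule_adjoin_eq_span_insert_one (hs : ∀ a ∈ s, ∀ b ∈ s, a * b = 0) :
    Subalgebra.toSubmodule (Algebra.adjoin R s) = span R (insert 1 s) := by
  let S : Subalgebra R A := (span R (insert 1 s)).toSubalgebra (subset_span (Set.mem_insert 1 s))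
    fun _ _ hx hy => span_insert_one_mul_le_of_mul_eq_zero hs (mul_mem_mul hx hy)
  refine le_antisymm
    (Algebra.adjoin_le (S := S) fun _ hx => subset_span (Set.mem_insert_of_mem 1 hx)) ?_
  rw [span_le]
  rintro _ (rfl | hx)
  · exact (Algebra.adjoin R s).one_mem
  · exact Algebra.subset_adjoin hx

end

namespace Matrix

variable (k : Type*) {n : Type*} [Field k] [Fintype n] [DecidableEq n]

def matrixUnits (P : Set (n × n)) : Set (Matrix n n k) := (fun p => single p.1 p.2 1) '' P

variable {k} {P : Set (n × n)}

theorem mul_eq_zero_of_mem_matrixUnits (hP : ∀ p ∈ P, ∀ q ∈ P, p.2 ≠ q.1)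
    {a b : Matrix n n k} (ha : a ∈ matrixUnits k P) (hb : b ∈ matrixUnits k P) : a * b = 0 := by
  obtain ⟨p, hp, rfl⟩ := ha
  obtain ⟨q, hq, rfl⟩ := hb
  exact single_mul_single_of_ne _ _ _ _ (hP p hp q hq) _

theorem commute_of_mem_matrixUnits (hP : ∀ p ∈ P, ∀ q ∈ P, p.2 ≠ q.1)
    {a b : Matrix n n k} (ha : a ∈ matrixUnits k P) (hb : b ∈ matrixUnits k P) : Commute a b :=
  (mul_eq_zero_of_mem_matrixUnits hP ha hb).trans (mul_eq_zero_of_mem_matrixUnits hP hb ha).symm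

theorem linearIndependent_option_one_matrixUnits [Nonempty n] (P : Finset (n × n))
    (hP : ∀ p ∈ P, p.1 ≠ p.2) :
    LinearIndependent k fun o : Option P => o.casesOn' 1 fun p => single p.1.1 p.1.2 (1 : k) := by
  have hv : LinearIndependent k fun p : P => single p.1.1 p.1.2 (1 : k) := by
    convert (stdBasis k n n).linearIndependent.comp _ Subtype.val_injective with p
    exact (stdBasis_eq_single k p.1.1 p.1.2).symm
  refine hv.option fun h1 => ?_
  obtain ⟨i⟩ := ‹Nonempty n›
  have : span k (Set.range fun p : P => single p.1.1 p.1.2 (1 : k)) ≤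
      LinearMap.ker (entryLinearMap k k i i) := by
    rw [span_le]
    rintro _ ⟨p, rfl⟩
    simp only [SetLike.mem_coe, LinearMap.mem_ker, entryLinearMap_apply, single_apply]
    exact if_neg fun ⟨h₁, h₂⟩ => hP p p.2 (h₁.trans h₂.symm)
  simpa using this h1

theorem finrank_adjoin_matrixUnits [Nonempty n] (P : Finset (n × n))
    (hP : ∀ p ∈ P, ∀ q ∈ P, p.2 ≠ q.1) :
    Module.finrank k (Algebra.adjoin k (matrixUnits k (P : Set (n × n)))) = P.card + 1 := by
  have hrange : insert 1 (matrixUnits k (P : Set (n × n))) =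
      Set.range fun o : Option P => o.casesOn' 1 fun p => single p.1.1 p.1.2 (1 : k) := by
    rw [Option.range_eq]
    simp [matrixUnits, Function.comp_def, Set.image_eq_range]
  rw [← Subalgebra.finrank_toSubmodule, Algebra.toSubmodule_adjoin_eq_span_insert_one
      fun _ ha _ hb => mul_eq_zero_of_mem_matrixUnits hP ha hb, hrange,
    finrank_span_eq_card
      (linearIndependent_option_one_matrixUnits P fun p hp => (hP p hp p hp).symm),
    Fintype.card_option, Fintype.card_coe]

end Matrix

theorem four_commuting_matrices_dim_five (k : Type) [Field k] :
    ∃ A₁ A₂ A₃ A₄ : Matrix (Fin 4) (Fin 4) k,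
      A₁ = Matrix.single 0 2 1 ∧ A₂ = Matrix.single 0 3 1 ∧
      A₃ = Matrix.single 1 2 1 ∧ A₄ = Matrix.single 1 3 1 ∧
      (∀ A ∈ ({A₁, A₂, A₃, A₄} : Set (Matrix (Fin 4) (Fin 4) k)),
        ∀ B ∈ ({A₁, A₂, A₃, A₄} : Set (Matrix (Fin 4) (Fin 4) k)), Commute A B) ∧
      Module.finrank k (Algebra.adjoin k ({A₁, A₂, A₃, A₄} :
        Set (Matrix (Fin 4) (Fin 4) k))) = 5 ∧ 4 < 5 := by
  let P : Finset (Fin 4 × Fin 4) := {(0, 2), (0, 3), (1, 2), (1, 3)}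
  have hP : ∀ p ∈ P, ∀ q ∈ P, p.2 ≠ q.1 := by decide
  have hunits : ({single 0 2 1, single 0 3 1, single 1 2 1, single 1 3 1} :
      Set (Matrix (Fin 4) (Fin 4) k)) = matrixUnits k (P : Set (Fin 4 × Fin 4)) := by
    simp [P, matrixUnits, Set.image_insert_eq]
  refine ⟨_, _, _, _, rfl, rfl, rfl, rfl, ?_, ?_, by norm_num⟩
  · rw [hunits]
    exact fun _ hA _ hB => commute_of_mem_matrixUnits hP hA hB
  · rw [hunits, finrank_adjoin_matrixUnits P hP]
    rfl
end

section
/- Let σ₁, ..., σ_ℓ ⊆ ℕ^2 be pairwise disjoint connected skew shapes. Define a relation ≤_b by σ_i ≤_b σ_j iff there exist v ∈ σ_i and w ∈ σ_j with v ≤ w (componentwise). Then ≤_b is antisymmetric across distinct shapes: if i ≠ j then it is not the case that both σ_i ≤_b σ_j and σ_j ≤_b σ_i. -/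
/-- The relation `≤_b`: some point of `σa` is componentwise below some point of `σb`. -/
def LeB (σa σb : Set (ℕ × ℕ)) : Prop :=
  ∃ v ∈ σa, ∃ w ∈ σb, v ≤ w

/-! ### Auxiliary lemmas -/

/-- Skew shapes are order-convex. -/
lemma skew_convex {σ : Set (ℕ × ℕ)} (h : IsSkewShape2 σ) :
    ∀ v ∈ σ, ∀ w ∈ σ, ∀ p, v ≤ p → p ≤ w → p ∈ σ := by
  obtain ⟨τ, ρ, ⟨_, hτ⟩, ⟨_, hρ⟩, rfl⟩ := h
  rintro v ⟨hvτ, hvρ⟩ w ⟨hwτ, hwρ⟩ p hvp hpw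
  exact ⟨hτ w hwτ p hpw, fun hpρ => hvρ (hρ p hpρ v hvp)⟩

lemma step_snd {v w : ℕ × ℕ} (h : IsStep v w) :
    w.2 ≤ v.2 + 1 ∧ v.2 ≤ w.2 + 1 := by
  rcases h with h | h | h | h <;> rw [h] <;> simp [Prod.snd_add] <;> omega

private lemma ivt_hit (g : ℕ → ℕ) (m y : ℕ) :
    (∀ i < m, g (i+1) ≤ g i + 1 ∧ g i ≤ g (i+1) + 1) →
    ((g 0 ≤ y ∧ y ≤ g m) ∨ (g m ≤ y ∧ y ≤ g 0)) →
    ∃ i ≤ m, g i = y := by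
  induction m with
  | zero => intro _ hy; exact ⟨0, le_rfl, by omega⟩
  | succ n ih =>
    intro hstep hy
    have hs := hstep n (by omega)
    by_cases hn : (g 0 ≤ y ∧ y ≤ g n) ∨ (g n ≤ y ∧ y ≤ g 0)
    · obtain ⟨i, h1, h2⟩ := ih (fun i hi => hstep i (by omega)) hn
      exact ⟨i, by omega, h2⟩
    · exact ⟨n+1, le_rfl, by omega⟩

private lemma ivt_cross (g : ℕ → ℕ) (m y : ℕ) :
    (∀ i < m, g (i+1) ≤ g i + 1 ∧ g i ≤ g (i+1) + 1) →
    g 0 ≤ y → y + 1 ≤ g m →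
    ∃ i < m, g i = y ∧ g (i+1) = y + 1 := by
  induction m with
  | zero => intro _ h0 hm; exfalso; omega
  | succ n ih =>
    intro hstep h0 hm
    have hs := hstep n (by omega)
    by_cases hn : y + 1 ≤ g n
    · obtain ⟨i, h1, h2⟩ := ih (fun i hi => hstep i (by omega)) h0 hn
      exact ⟨i, by omega, h2⟩
    · exact ⟨n, by omega, by omega, by omega⟩

/-- If a connected shape has cells in two rows, it has a cell in every row between. -/
lemma row_between {σ : Set (ℕ × ℕ)} (hc : IsConnectedShape2 σ)
    {p q : ℕ × ℕ} (hp : p ∈ σ) (hq : q ∈ σ) {y : ℕ}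
    (hy : (p.2 ≤ y ∧ y ≤ q.2) ∨ (q.2 ≤ y ∧ y ≤ p.2)) :
    ∃ x, (x, y) ∈ σ := by
  obtain ⟨m, f, h0, hm, hmem, hstep⟩ := hc p hp q hq
  obtain ⟨i, him, hi⟩ := ivt_hit (fun i => (f i).2) m y
    (fun i hi => step_snd (hstep i hi))
    (by simp only [h0, hm]; exact hy)
  refine ⟨(f i).1, ?_⟩
  have e : ((f i).1, y) = f i := by rw [← hi]
  rw [e]; exact hmem i him

/-- A connected shape with cells in rows `y` and `y+1` has a vertical domino between them. -/
lemma domino {σ : Set (ℕ × ℕ)} (hc : IsConnectedShape2 σ)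
    {p q : ℕ × ℕ} (hp : p ∈ σ) (hq : q ∈ σ) {y : ℕ}
    (hpy : p.2 ≤ y) (hqy : y + 1 ≤ q.2) :
    ∃ x, (x, y) ∈ σ ∧ (x, y+1) ∈ σ := by
  obtain ⟨m, f, h0, hm, hmem, hstep⟩ := hc p hp q hq
  obtain ⟨i, him, h1, h2⟩ := ivt_cross (fun i => (f i).2) m y
    (fun i hi => step_snd (hstep i hi))
    (by simp only [h0]; exact hpy) (by simp only [hm]; exact hqy)
  have hst := hstep i him
  have hx : f (i+1) = ((f i).1, (f i).2 + 1) := by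
    rcases hst with h | h | h | h
    · exfalso; rw [h] at h2; simp [Prod.snd_add] at h2; omega
    · rw [h]; rfl
    · exfalso; rw [h] at h1; simp [Prod.snd_add] at h1; omega
    · exfalso; rw [h] at h1; simp [Prod.snd_add] at h1; omega
  refine ⟨(f i).1, ?_, ?_⟩
  · have e : ((f i).1, y) = f i := by rw [← h1]
    rw [e]; exact hmem i (by omega)
  · have e : ((f i).1, y + 1) = f (i+1) := by rw [hx, h1]
    rw [e]; exact hmem (i+1) (by omega)

/-- In a common row, all cells of `S` are on the same side of all cells of `T`. -/
lemma row_side {S T : Set (ℕ × ℕ)}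
    (hSconv : ∀ v ∈ S, ∀ w ∈ S, ∀ p, v ≤ p → p ≤ w → p ∈ S)
    (hTconv : ∀ v ∈ T, ∀ w ∈ T, ∀ p, v ≤ p → p ≤ w → p ∈ T)
    (hdisj : Disjoint S T) {y u v p q : ℕ}
    (hu : (u, y) ∈ S) (hv : (v, y) ∈ T) (huv : u < v)
    (hp : (p, y) ∈ S) (hq : (q, y) ∈ T) : p < q := by
  by_contra hcon
  push_neg at hcon
  rcases le_or_gt u q with h | h
  · exact Set.disjoint_left.mp hdisj
      (hSconv _ hu _ hp (q, y) (Prod.mk_le_mk.mpr ⟨h, le_rfl⟩)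
        (Prod.mk_le_mk.mpr ⟨hcon, le_rfl⟩)) hq
  · exact Set.disjoint_left.mp hdisj hu
      (hTconv _ hq _ hv (u, y) (Prod.mk_le_mk.mpr ⟨h.le, le_rfl⟩)
        (Prod.mk_le_mk.mpr ⟨huv.le, le_rfl⟩))

section Main

variable {S T : Set (ℕ × ℕ)}
  (hSconv : ∀ v ∈ S, ∀ w ∈ S, ∀ p, v ≤ p → p ≤ w → p ∈ S)
  (hTconv : ∀ v ∈ T, ∀ w ∈ T, ∀ p, v ≤ p → p ≤ w → p ∈ T)
  (hSconn : IsConnectedShape2 S) (hTconn : IsConnectedShape2 T)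
  (hdisj : Disjoint S T)

include hSconv hTconv hSconn hTconn hdisj

lemma prop_step_up {y u v : ℕ} (hu : (u, y) ∈ S) (hv : (v, y) ∈ T) (huv : u < v)
    (hS1 : ∃ x, (x, y+1) ∈ S) (hT1 : ∃ x, (x, y+1) ∈ T) :
    ∃ u' v', u' < v' ∧ (u', y+1) ∈ S ∧ (v', y+1) ∈ T := by
  obtain ⟨xs, hxs⟩ := hS1
  obtain ⟨xt, hxt⟩ := hT1
  obtain ⟨a, ha1, ha2⟩ := domino hSconn hu hxs le_rfl le_rfl
  obtain ⟨b, hb1, hb2⟩ := domino hTconn hv hxt le_rfl le_rfl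
  exact ⟨a, b, row_side hSconv hTconv hdisj hu hv huv ha1 hb1, ha2, hb2⟩

lemma prop_step_down {y u v : ℕ} (hu : (u, y+1) ∈ S) (hv : (v, y+1) ∈ T) (huv : u < v)
    (hS0 : ∃ x, (x, y) ∈ S) (hT0 : ∃ x, (x, y) ∈ T) :
    ∃ u' v', u' < v' ∧ (u', y) ∈ S ∧ (v', y) ∈ T := by
  obtain ⟨xs, hxs⟩ := hS0
  obtain ⟨xt, hxt⟩ := hT0
  obtain ⟨a, ha1, ha2⟩ := domino hSconn hxs hu le_rfl le_rfl
  obtain ⟨b, hb1, hb2⟩ := domino hTconn hxt hv le_rfl le_rfl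
  exact ⟨a, b, row_side hSconv hTconv hdisj hu hv huv ha2 hb2, ha1, hb1⟩

lemma prop_up_iter (y : ℕ) :
    ∀ k, (∀ j ≤ k, (∃ x, (x, y+j) ∈ S) ∧ (∃ x, (x, y+j) ∈ T)) →
    ∀ u v, (u, y) ∈ S → (v, y) ∈ T → u < v →
    ∃ u' v', u' < v' ∧ (u', y+k) ∈ S ∧ (v', y+k) ∈ T := by
  intro k
  induction k with
  | zero => intro _ u v hu hv huv; exact ⟨u, v, huv, hu, hv⟩
  | succ n ih =>
    intro hrows u v hu hv huv
    obtain ⟨u', v', h1, h2, h3⟩ := ih (fun j hj => hrows j (by omega)) u v hu hv huv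
    exact prop_step_up hSconv hTconv hSconn hTconn hdisj h2 h3 h1
      (hrows (n+1) le_rfl).1 (hrows (n+1) le_rfl).2

lemma prop_down_iter (y : ℕ) :
    ∀ k, (∀ j ≤ k, (∃ x, (x, y+j) ∈ S) ∧ (∃ x, (x, y+j) ∈ T)) →
    ∀ u v, (u, y+k) ∈ S → (v, y+k) ∈ T → u < v →
    ∃ u' v', u' < v' ∧ (u', y) ∈ S ∧ (v', y) ∈ T := by
  intro k
  induction k with
  | zero => intro _ u v hu hv huv; exact ⟨u, v, huv, hu, hv⟩
  | succ n ih =>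
    intro hrows u v hu hv huv
    obtain ⟨u', v', h1, h2, h3⟩ := prop_step_down hSconv hTconv hSconn hTconn hdisj
      hu hv huv (hrows n (by omega)).1 (hrows n (by omega)).2
    exact ih (fun j hj => hrows j (by omega)) u' v' h2 h3 h1

lemma move_witness {y z u v : ℕ} (hu : (u, y) ∈ S) (hv : (v, y) ∈ T) (huv : u < v)
    (hSz : ∃ x, (x, z) ∈ S) (hTz : ∃ x, (x, z) ∈ T) :
    ∃ u' v', u' < v' ∧ (u', z) ∈ S ∧ (v', z) ∈ T := by
  obtain ⟨xs, hxs⟩ := hSz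
  obtain ⟨xt, hxt⟩ := hTz
  rcases le_total y z with h | h
  · have hrows : ∀ j ≤ z - y, (∃ x, (x, y+j) ∈ S) ∧ (∃ x, (x, y+j) ∈ T) := fun j hj =>
      ⟨row_between hSconn hu hxs (Or.inl ⟨by omega, by omega⟩),
       row_between hTconn hv hxt (Or.inl ⟨by omega, by omega⟩)⟩
    have := prop_up_iter hSconv hTconv hSconn hTconn hdisj y (z - y) hrows u v hu hv huv
    rwa [show y + (z - y) = z from by omega] at this
  · have hrows : ∀ j ≤ y - z, (∃ x, (x, z+j) ∈ S) ∧ (∃ x, (x, z+j) ∈ T) := fun j hj =>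
      ⟨row_between hSconn hxs hu (Or.inl ⟨by omega, by omega⟩),
       row_between hTconn hxt hv (Or.inl ⟨by omega, by omega⟩)⟩
    refine prop_down_iter hSconv hTconv hSconn hTconn hdisj z (y - z) hrows u v ?_ ?_ huv
    · rwa [show z + (y - z) = y from by omega]
    · rwa [show z + (y - z) = y from by omega]

end Main

/-- Going up rows in a connected convex shape, left ends move weakly left. -/
lemma left_mono_up {T : Set (ℕ × ℕ)}
    (hTconv : ∀ v ∈ T, ∀ w ∈ T, ∀ p, v ≤ p → p ≤ w → p ∈ T)
    (hTconn : IsConnectedShape2 T)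
    (y0 x0 : ℕ) (h0 : (x0, y0) ∈ T) :
    ∀ k, (∀ j ≤ k, ∃ x, (x, y0+j) ∈ T) → ∃ q ≤ x0, (q, y0+k) ∈ T := by
  intro k
  induction k with
  | zero => exact fun _ => ⟨x0, le_rfl, h0⟩
  | succ n ih =>
    intro hrows
    obtain ⟨q, hq, hqm⟩ := ih (fun j hj => hrows j (by omega))
    obtain ⟨x1, hx1⟩ := hrows (n+1) le_rfl
    obtain ⟨w, hw0, hw1⟩ := domino hTconn hqm hx1 le_rfl le_rfl
    rcases le_or_gt w q with h | h
    · exact ⟨w, h.trans hq, hw1⟩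
    · refine ⟨q, hq, hTconv _ hqm _ hw1 (q, y0+n+1) ?_ ?_⟩
      · exact Prod.mk_le_mk.mpr ⟨le_rfl, by omega⟩
      · exact Prod.mk_le_mk.mpr ⟨h.le, le_rfl⟩

/-- Going down rows in a connected convex shape, right ends move weakly right. -/
lemma right_mono_down {S : Set (ℕ × ℕ)}
    (hSconv : ∀ v ∈ S, ∀ w ∈ S, ∀ p, v ≤ p → p ≤ w → p ∈ S)
    (hSconn : IsConnectedShape2 S) (y0 : ℕ) :
    ∀ k x0, (x0, y0+k) ∈ S → (∀ j ≤ k, ∃ x, (x, y0+j) ∈ S) →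
    ∃ p, x0 ≤ p ∧ (p, y0) ∈ S := by
  intro k
  induction k with
  | zero => exact fun x0 h _ => ⟨x0, le_rfl, h⟩
  | succ n ih =>
    intro x0 h0 hrows
    obtain ⟨x1, hx1⟩ := hrows n (by omega)
    obtain ⟨w, hw0, hw1⟩ := domino hSconn hx1 h0 le_rfl le_rfl
    rcases le_or_gt x0 w with h | h
    · obtain ⟨p, hp1, hp2⟩ := ih w hw0 (fun j hj => hrows j (by omega))
      exact ⟨p, h.trans hp1, hp2⟩
    · have hx0n : (x0, y0+n) ∈ S :=
        hSconv _ hw0 _ h0 _ (Prod.mk_le_mk.mpr ⟨h.le, le_rfl⟩)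
          (Prod.mk_le_mk.mpr ⟨le_rfl, by omega⟩)
      exact ih x0 hx0n (fun j hj => hrows j (by omega))

lemma final_step {S T : Set (ℕ × ℕ)}
    (hSconv : ∀ v ∈ S, ∀ w ∈ S, ∀ p, v ≤ p → p ≤ w → p ∈ S)
    (hTconv : ∀ v ∈ T, ∀ w ∈ T, ∀ p, v ≤ p → p ≤ w → p ∈ T)
    (hSconn : IsConnectedShape2 S) (hTconn : IsConnectedShape2 T)
    (hdisj : Disjoint S T)
    {z u v : ℕ} (hu : (u, z) ∈ S) (hv : (v, z) ∈ T) (huv : u < v)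
    {c1 c2 d1 d2 : ℕ} (hc : (c1, c2) ∈ T) (hd : (d1, d2) ∈ S)
    (h1 : c1 ≤ d1) (h2 : c2 ≤ z) (h3 : z ≤ d2) : False := by
  have hTr : ∀ j ≤ z - c2, ∃ x, (x, c2 + j) ∈ T := fun j hj =>
    row_between hTconn hc hv (Or.inl ⟨by omega, by omega⟩)
  obtain ⟨q, hqle, hq⟩ := left_mono_up hTconv hTconn c2 c1 hc (z - c2) hTr
  have hq' : (q, z) ∈ T := by
    rwa [show c2 + (z - c2) = z from by omega] at hq
  have hSr : ∀ j ≤ d2 - z, ∃ x, (x, z + j) ∈ S := fun j hj =>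
    row_between hSconn hu hd (Or.inl ⟨by omega, by omega⟩)
  have hd' : (d1, z + (d2 - z)) ∈ S := by
    rwa [show z + (d2 - z) = d2 from by omega]
  obtain ⟨p, hple, hp⟩ := right_mono_down hSconv hSconn z (d2 - z) d1 hd' hSr
  have := row_side hSconv hTconv hdisj hu hv huv hp hq'
  omega

lemma main_case {S T : Set (ℕ × ℕ)}
    (hSconv : ∀ v ∈ S, ∀ w ∈ S, ∀ p, v ≤ p → p ≤ w → p ∈ S)
    (hTconv : ∀ v ∈ T, ∀ w ∈ T, ∀ p, v ≤ p → p ≤ w → p ∈ T)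
    (hSconn : IsConnectedShape2 S) (hTconn : IsConnectedShape2 T)
    (hdisj : Disjoint S T)
    {y u v : ℕ} (hu : (u, y) ∈ S) (hv : (v, y) ∈ T) (huv : u < v)
    {c1 c2 d1 d2 : ℕ} (hc : (c1, c2) ∈ T) (hd : (d1, d2) ∈ S)
    (h1 : c1 ≤ d1) (h2 : c2 ≤ d2) : False := by
  -- choose a common row z with c2 ≤ z ≤ d2
  have key : ∀ z, c2 ≤ z → z ≤ d2 → (∃ x, (x, z) ∈ S) → (∃ x, (x, z) ∈ T) → False := by
    intro z hz1 hz2 hSz hTz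
    obtain ⟨u', v', h4, h5, h6⟩ :=
      move_witness hSconv hTconv hSconn hTconn hdisj hu hv huv hSz hTz
    exact final_step hSconv hTconv hSconn hTconn hdisj h5 h6 h4 hc hd h1 hz1 hz2
  rcases le_or_gt y d2 with hyd | hyd
  · rcases le_total c2 y with hcy | hcy
    · exact key y hcy hyd ⟨u, hu⟩ ⟨v, hv⟩
    · exact key c2 le_rfl h2
        (row_between hSconn hu hd (Or.inl ⟨hcy, h2⟩)) ⟨c1, hc⟩
  · exact key d2 h2 le_rfl ⟨d1, hd⟩
      (row_between hTconn hc hv (Or.inl ⟨h2, by omega⟩))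

theorem leB_antisymmetric {ℓ : ℕ} {σ : Fin ℓ → Set (ℕ × ℕ)}
    (hskew : ∀ j, IsSkewShape2 (σ j))
    (hconn : ∀ j, IsConnectedShape2 (σ j))
    (hdisj : ∀ i j, i ≠ j → Disjoint (σ i) (σ j)) :
    ∀ i j, i ≠ j → ¬(LeB (σ i) (σ j) ∧ LeB (σ j) (σ i)) := by
  intro i j hij hboth
  obtain ⟨⟨a, ha, b, hb, hab⟩, ⟨c, hc, d, hd, hcd⟩⟩ := hboth
  obtain ⟨a1, a2⟩ := a
  obtain ⟨b1, b2⟩ := b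
  obtain ⟨c1, c2⟩ := c
  obtain ⟨d1, d2⟩ := d
  obtain ⟨hab1, hab2⟩ := Prod.mk_le_mk.mp hab
  obtain ⟨hcd1, hcd2⟩ := Prod.mk_le_mk.mp hcd
  have hSconv := skew_convex (hskew i)
  have hTconv := skew_convex (hskew j)
  have hSconn := hconn i
  have hTconn := hconn j
  have hdisj' := hdisj i j hij
  -- find a common row
  have hcommon : ∃ y u v, (u, y) ∈ σ i ∧ (v, y) ∈ σ j := by
    rcases le_total a2 c2 with h | h
    · obtain ⟨x, hx⟩ := row_between hSconn ha hd (Or.inl ⟨h, hcd2⟩)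
      exact ⟨c2, x, c1, hx, hc⟩
    · obtain ⟨x, hx⟩ := row_between hTconn hc hb (Or.inl ⟨h, hab2⟩)
      exact ⟨a2, a1, x, ha, hx⟩
  obtain ⟨y, u, v, hu, hv⟩ := hcommon
  have huv : u ≠ v := by
    intro h
    exact Set.disjoint_left.mp hdisj' hu (h ▸ hv)
  rcases lt_or_gt_of_ne huv with h | h
  · exact main_case hSconv hTconv hSconn hTconn hdisj' hu hv h hc hd hcd1 hcd2
  · exact main_case hTconv hSconv hTconn hSconn hdisj'.symm hv hu h ha hb hab1 hab2
end

section
/- Let S = k[x₁,...,x_n] and let I ⊆ K ⊆ S be monomial ideals of finite colength. Let ζ ⊆ ℕ^n be the skew shape of monomial exponents corresponding to K/I, with connected components ζ₁, ..., ζ_ℓ. For each j, let P_j be the k-span in S/I of the monomials with exponents in ζ_j. Then K/I = P₁ ⊕ ⋯ ⊕ P_ℓ as ℕ^n-graded S-modules, and each P_j is indecomposable as an ℕ^n-graded S-module. -/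
open MvPolynomial

/-- An ideal of `k[x₁,…,xₙ]` is a monomial ideal if it is generated by monomials. -/
def IsMonomialIdeal {k : Type} [Field k] {n : ℕ}
    (I : Ideal (MvPolynomial (Fin n) k)) : Prop :=
  ∃ A : Set (Fin n →₀ ℕ), I = Ideal.span ((fun a => monomial a (1 : k)) '' A)

/-- A lattice step between exponent vectors: difference in `{±e₁, …, ±eₙ}`. -/
def IsStepExp {n : ℕ} (v w : Fin n →₀ ℕ) : Prop :=
  ∃ i : Fin n, w = v + Finsupp.single i 1 ∨ v = w + Finsupp.single i 1

/-- Reachability within a set of exponent vectors via lattice paths. -/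
def ReachableExp {n : ℕ} (X : Set (Fin n →₀ ℕ)) (v w : Fin n →₀ ℕ) : Prop :=
  ∃ (m : ℕ) (f : ℕ → (Fin n →₀ ℕ)), f 0 = v ∧ f m = w ∧
    (∀ i ≤ m, f i ∈ X) ∧ ∀ i < m, IsStepExp (f i) (f (i + 1))

/-- `τ` is a connected component of `X`. -/
def IsConnCompExp {n : ℕ} (X τ : Set (Fin n →₀ ℕ)) : Prop :=
  ∃ v ∈ X, τ = {w ∈ X | ReachableExp X v w}

/-- A submodule of `S/I` is a monomial (i.e. ℕⁿ-graded) submodule if it is spanned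
by the images of the monomials it contains. -/
def IsMonomialSubmodule {k : Type} [Field k] {n : ℕ}
    (I : Ideal (MvPolynomial (Fin n) k))
    (A : Submodule (MvPolynomial (Fin n) k) (MvPolynomial (Fin n) k ⧸ I)) : Prop :=
  A = Submodule.span (MvPolynomial (Fin n) k)
    {x | ∃ a : Fin n →₀ ℕ, x = I.mkQ (monomial a (1 : k)) ∧ x ∈ A}

section Reach
variable {n : ℕ} {X : Set (Fin n →₀ ℕ)} {u v w w' : Fin n →₀ ℕ}

lemma stepExp_symm (h : IsStepExp v w) : IsStepExp w v := by
  obtain ⟨i, h⟩ := h; exact ⟨i, h.symm⟩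

lemma reach_refl (hv : v ∈ X) : ReachableExp X v v :=
  ⟨0, fun _ => v, rfl, rfl, fun _ _ => hv, fun i hi => absurd hi (Nat.not_lt_zero i)⟩

lemma reach_symm (h : ReachableExp X v w) : ReachableExp X w v := by
  obtain ⟨m, f, h0, hm, hmem, hstep⟩ := h
  refine ⟨m, fun i => f (m - i), by simpa using hm, by simpa using h0,
    fun i _ => hmem _ (Nat.sub_le _ _), fun i hi => ?_⟩
  have hj : m - (i + 1) + 1 = m - i := by omega
  have := hstep (m - (i + 1)) (by omega)
  rw [hj] at this
  exact stepExp_symm this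

lemma reach_trans (h1 : ReachableExp X u v) (h2 : ReachableExp X v w) :
    ReachableExp X u w := by
  obtain ⟨m, f, hf0, hfm, hfmem, hfstep⟩ := h1
  obtain ⟨m', g, hg0, hgm, hgmem, hgstep⟩ := h2
  refine ⟨m + m', fun i => if i ≤ m then f i else g (i - m), by simp [hf0], ?_, ?_, ?_⟩
  · by_cases h : m + m' ≤ m
    · have : m' = 0 := by omega
      simp only [if_pos h]
      rw [show m + m' = m by omega, hfm, ← hg0, ← hgm, this]
    · simp only [if_neg h]
      rw [show m + m' - m = m' by omega, hgm]
  · intro i hi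
    by_cases h : i ≤ m
    · simpa [h] using hfmem i h
    · simpa [h] using hgmem (i - m) (by omega)
  · intro i hi
    by_cases h : i < m
    · simpa [h.le, Nat.succ_le_of_lt h] using hfstep i h
    · have hi1 : ¬ (i + 1 ≤ m) := by omega
      have key : (if i ≤ m then f i else g (i - m)) = g (i - m) := by
        by_cases h' : i = m
        · subst h'; simp [hfm, ← hg0]
        · rw [if_neg (by omega)]
      simp only []
      rw [key, if_neg hi1, show i + 1 - m = (i - m) + 1 by omega]
      exact hgstep (i - m) (by omega)

lemma reach_extend (h : ReachableExp X v w) (hs : IsStepExp w w') (hw' : w' ∈ X) :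
    ReachableExp X v w' := by
  have hw : w ∈ X := by
    obtain ⟨m, f, h0, hm, hmem, _⟩ := h
    exact hm ▸ hmem m le_rfl
  refine reach_trans h ⟨1, fun i => if i = 0 then w else w', rfl, rfl, ?_, ?_⟩
  · intro i hi
    by_cases h0 : i = 0 <;> simp [h0, hw, hw']
  · intro i hi
    have : i = 0 := by omega
    subst this; simpa using hs

lemma reach_of_path {m : ℕ} {f : ℕ → (Fin n →₀ ℕ)} (hmem : ∀ i ≤ m, f i ∈ X)
    (hstep : ∀ i < m, IsStepExp (f i) (f (i + 1))) {i : ℕ} (hi : i ≤ m) :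
    ReachableExp X (f 0) (f i) :=
  ⟨i, f, rfl, rfl, fun j hj => hmem j (hj.trans hi), fun j hj => hstep j (hj.trans_le hi)⟩

end Reach



section Alg
variable {k : Type} [Field k] {n : ℕ} {I : Ideal (MvPolynomial (Fin n) k)}

lemma mem_monIdeal_iff (hI : IsMonomialIdeal I) (p : MvPolynomial (Fin n) k) :
    p ∈ I ↔ ∀ a ∈ p.support, monomial a (1 : k) ∈ I := by
  obtain ⟨A, rfl⟩ := hI
  rw [mem_ideal_span_monomial_image]
  refine forall₂_congr fun a _ => ?_
  rw [mem_ideal_span_monomial_image]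
  simp [support_monomial]

lemma coeff_eq_of_sub_mem (hI : IsMonomialIdeal I) {p q : MvPolynomial (Fin n) k}
    (h : p - q ∈ I) {a : Fin n →₀ ℕ} (ha : monomial a (1 : k) ∉ I) :
    coeff a p = coeff a q := by
  by_contra hne
  have hmem : a ∈ (p - q).support := by
    rw [mem_support_iff, coeff_sub]
    exact sub_ne_zero.2 hne
  exact ha ((mem_monIdeal_iff hI _).1 h a hmem)

/-- `σ` is closed under adding `eᵢ`, modulo exponents of monomials in `I`. -/
def UpClosedMod (I : Ideal (MvPolynomial (Fin n) k)) (σ : Set (Fin n →₀ ℕ)) : Prop :=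
  ∀ a ∈ σ, ∀ i : Fin n,
    monomial (a + Finsupp.single i 1) (1 : k) ∈ I ∨ a + Finsupp.single i 1 ∈ σ

lemma mon_up_mem (hI : monomial a (1:k) ∈ I) (i : Fin n) :
    monomial (a + Finsupp.single i 1) (1 : k) ∈ I := by
  have : monomial (a + Finsupp.single i 1) (1 : k)
      = monomial a (1:k) * monomial (Finsupp.single i 1) (1:k) := by
    rw [monomial_mul, mul_one]
  rw [this]
  exact Ideal.mul_mem_right _ _ hI

/-- membership in the `k`-span of monomial images. -/
lemma mem_kspan_iff (hI : IsMonomialIdeal I) (σ : Set (Fin n →₀ ℕ))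
    (x : MvPolynomial (Fin n) k ⧸ I) :
    x ∈ Submodule.span k (I.mkQ '' ((fun a => monomial a (1 : k)) '' σ)) ↔
      ∃ p : MvPolynomial (Fin n) k, I.mkQ p = x ∧
        ∀ a ∈ p.support, a ∈ σ ∨ monomial a (1 : k) ∈ I := by
  constructor
  · intro hx
    induction hx using Submodule.span_induction with
    | mem x hx =>
        obtain ⟨-, ⟨a, ha, rfl⟩, rfl⟩ := hx
        refine ⟨monomial a 1, rfl, fun b hb => ?_⟩
        classical
        rw [support_monomial, if_neg one_ne_zero, Finset.mem_singleton] at hb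
        exact hb ▸ Or.inl ha
    | zero => exact ⟨0, by simp, by simp⟩
    | add x y _ _ hx hy =>
        obtain ⟨p, rfl, hp⟩ := hx
        obtain ⟨q, rfl, hq⟩ := hy
        exact ⟨p + q, map_add _ _ _, fun a ha => by
          rcases Finset.mem_union.1 (support_add ha) with h | h
          · exact hp a h
          · exact hq a h⟩
    | smul c x _ hx =>
        obtain ⟨p, rfl, hp⟩ := hx
        refine ⟨c • p, ?_, fun a ha => hp a (support_smul ha)⟩
        rw [Submodule.mkQ_apply, Submodule.mkQ_apply, Submodule.Quotient.mk_smul]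
  · rintro ⟨p, rfl, hp⟩
    rw [show I.mkQ p = ∑ a ∈ p.support, I.mkQ (monomial a (coeff a p)) by
      rw [← map_sum]; exact congrArg _ p.as_sum]
    refine Submodule.sum_mem _ fun a ha => ?_
    have : monomial a (coeff a p) = (coeff a p) • monomial a (1:k) := by
      rw [smul_monomial, smul_eq_mul, mul_one]
    rw [this, Submodule.mkQ_apply, Submodule.Quotient.mk_smul]
    rcases hp a ha with h | h
    · exact Submodule.smul_mem _ _ (Submodule.subset_span ⟨_, ⟨a, h, rfl⟩, rfl⟩)
    · have : (Submodule.Quotient.mk (monomial a (1:k)) : MvPolynomial (Fin n) k ⧸ I) = 0 :=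
        (Submodule.Quotient.mk_eq_zero I).2 h
      rw [this, smul_zero]
      exact Submodule.zero_mem _
end Alg

section Alg2
variable {k : Type} [Field k] {n : ℕ} {I : Ideal (MvPolynomial (Fin n) k)}

lemma support_cond_mul (hI : IsMonomialIdeal I) {σ : Set (Fin n →₀ ℕ)}
    (hσ : UpClosedMod I σ) (r p : MvPolynomial (Fin n) k)
    (hp : ∀ a ∈ p.support, a ∈ σ ∨ monomial a (1 : k) ∈ I) :
    ∀ a ∈ (r * p).support, a ∈ σ ∨ monomial a (1 : k) ∈ I := by
  induction r using MvPolynomial.induction_on with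
  | C c =>
      intro a ha
      rw [C_mul'] at ha
      exact hp a (support_smul ha)
  | add r s hr hs =>
      intro a ha
      rw [add_mul] at ha
      rcases Finset.mem_union.1 (support_add ha) with h | h
      · exact hr a h
      · exact hs a h
  | mul_X r i hr =>
      intro a ha
      rw [show r * X i * p = r * p * X i by ring, support_mul_X] at ha
      obtain ⟨b, hb, rfl⟩ := Finset.mem_map.1 ha
      rcases hr b hb with h | h
      · rcases hσ b h i with h' | h'
        · exact Or.inr h'
        · exact Or.inl h'
      · exact Or.inr (mon_up_mem h i)

lemma mem_sspan_iff (hI : IsMonomialIdeal I) {σ : Set (Fin n →₀ ℕ)}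
    (hσ : UpClosedMod I σ) (x : MvPolynomial (Fin n) k ⧸ I) :
    x ∈ Submodule.span (MvPolynomial (Fin n) k)
        (I.mkQ '' ((fun a => monomial a (1 : k)) '' σ)) ↔
      ∃ p : MvPolynomial (Fin n) k, I.mkQ p = x ∧
        ∀ a ∈ p.support, a ∈ σ ∨ monomial a (1 : k) ∈ I := by
  constructor
  · intro hx
    induction hx using Submodule.span_induction with
    | mem x hx =>
        obtain ⟨-, ⟨a, ha, rfl⟩, rfl⟩ := hx
        refine ⟨monomial a 1, rfl, fun b hb => ?_⟩
        classical
        rw [support_monomial, if_neg one_ne_zero, Finset.mem_singleton] at hb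
        exact hb ▸ Or.inl ha
    | zero => exact ⟨0, by simp, by simp⟩
    | add x y _ _ hx hy =>
        obtain ⟨p, rfl, hp⟩ := hx
        obtain ⟨q, rfl, hq⟩ := hy
        exact ⟨p + q, map_add _ _ _, fun a ha => by
          rcases Finset.mem_union.1 (support_add ha) with h | h
          · exact hp a h
          · exact hq a h⟩
    | smul r x _ hx =>
        obtain ⟨p, rfl, hp⟩ := hx
        exact ⟨r * p, by rw [← smul_eq_mul, map_smul], support_cond_mul hI hσ r p hp⟩
  · rintro ⟨p, hpx, hp⟩
    have h1 : x ∈ Submodule.span k (I.mkQ '' ((fun a => monomial a (1 : k)) '' σ)) :=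
      (mem_kspan_iff hI σ x).2 ⟨p, hpx, hp⟩
    have h2 : Submodule.span k (I.mkQ '' ((fun a => monomial a (1 : k)) '' σ)) ≤
        (Submodule.span (MvPolynomial (Fin n) k)
          (I.mkQ '' ((fun a => monomial a (1 : k)) '' σ))).restrictScalars k :=
      Submodule.span_le.2 Submodule.subset_span
    exact h2 h1

lemma exponent_mem_of_mem (hI : IsMonomialIdeal I) {σ : Set (Fin n →₀ ℕ)}
    (hσ : UpClosedMod I σ) {a : Fin n →₀ ℕ} (ha : monomial a (1 : k) ∉ I)
    (h : I.mkQ (monomial a (1 : k)) ∈ Submodule.span (MvPolynomial (Fin n) k)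
      (I.mkQ '' ((fun a => monomial a (1 : k)) '' σ))) : a ∈ σ := by
  obtain ⟨p, hp, hsupp⟩ := (mem_sspan_iff hI hσ _).1 h
  have hsub : p - monomial a 1 ∈ I := by
    rwa [Submodule.mkQ_apply, Submodule.mkQ_apply, Submodule.Quotient.eq] at hp
  have hc : coeff a p = 1 := by
    have := coeff_eq_of_sub_mem hI hsub ha
    classical
    rwa [coeff_monomial, if_pos rfl] at this
  have : a ∈ p.support := mem_support_iff.2 (by rw [hc]; exact one_ne_zero)
  rcases hsupp a this with h' | h'
  · exact h'
  · exact absurd h' ha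
end Alg2


section Alg3
variable {k : Type} [Field k] {n : ℕ} {I K : Ideal (MvPolynomial (Fin n) k)}

lemma smul_mon_mem {A : Submodule (MvPolynomial (Fin n) k) (MvPolynomial (Fin n) k ⧸ I)}
    {b : Fin n →₀ ℕ} (hb : I.mkQ (monomial b (1 : k)) ∈ A) (i : Fin n) :
    I.mkQ (monomial (b + Finsupp.single i 1) (1 : k)) ∈ A := by
  have h : monomial (b + Finsupp.single i 1) (1 : k) =
      monomial (Finsupp.single i 1) (1 : k) • monomial b (1 : k) := by
    rw [smul_eq_mul, monomial_mul, one_mul, add_comm]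
  rw [h, map_smul]
  exact Submodule.smul_mem _ _ hb

lemma monSubmodule_eq {A : Submodule (MvPolynomial (Fin n) k) (MvPolynomial (Fin n) k ⧸ I)}
    (hA : IsMonomialSubmodule I A) :
    A = Submodule.span (MvPolynomial (Fin n) k)
      (I.mkQ '' ((fun a => monomial a (1 : k)) ''
        {b : Fin n →₀ ℕ | I.mkQ (monomial b (1 : k)) ∈ A})) := by
  have hset : {x | ∃ a : Fin n →₀ ℕ, x = I.mkQ (monomial a (1 : k)) ∧ x ∈ A} =
      I.mkQ '' ((fun a => monomial a (1 : k)) ''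
        {b : Fin n →₀ ℕ | I.mkQ (monomial b (1 : k)) ∈ A}) := by
    ext x
    constructor
    · rintro ⟨a, rfl, h⟩
      exact ⟨monomial a 1, ⟨a, h, rfl⟩, rfl⟩
    · rintro ⟨-, ⟨a, ha, rfl⟩, rfl⟩
      exact ⟨a, rfl, ha⟩
  conv_lhs => rw [hA]
  rw [hset]

lemma monSubmodule_upClosed
    {A : Submodule (MvPolynomial (Fin n) k) (MvPolynomial (Fin n) k ⧸ I)} :
    UpClosedMod I {b : Fin n →₀ ℕ | I.mkQ (monomial b (1 : k)) ∈ A} :=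
  fun _ hb i => Or.inr (smul_mon_mem hb i)

lemma upClosedMod_union {σ τ : Set (Fin n →₀ ℕ)} (hσ : UpClosedMod I σ)
    (hτ : UpClosedMod I τ) : UpClosedMod I (σ ∪ τ) := by
  rintro a (ha | ha) i
  · rcases hσ a ha i with h | h
    · exact Or.inl h
    · exact Or.inr (Or.inl h)
  · rcases hτ a ha i with h | h
    · exact Or.inl h
    · exact Or.inr (Or.inr h)

lemma comp_upClosed (hIK : I ≤ K) {ζ : Set (Fin n →₀ ℕ)}
    (hζ : ζ = {a | monomial a (1 : k) ∈ K ∧ monomial a (1 : k) ∉ I})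
    {τ : Set (Fin n →₀ ℕ)} {v : Fin n →₀ ℕ}
    (hτ : τ = {w ∈ ζ | ReachableExp ζ v w}) : UpClosedMod I τ := by
  intro a ha i
  rw [hτ] at ha
  obtain ⟨haζ, hreach⟩ := ha
  by_cases h : monomial (a + Finsupp.single i 1) (1 : k) ∈ I
  · exact Or.inl h
  · have haK : monomial a (1 : k) ∈ K := (hζ ▸ haζ).1
    have hup : a + Finsupp.single i 1 ∈ ζ := by
      rw [hζ]; exact ⟨mon_up_mem haK i, h⟩
    exact Or.inr (hτ ▸ ⟨hup, reach_extend hreach ⟨i, Or.inl rfl⟩ hup⟩)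
end Alg3

section Alg4
variable {k : Type} [Field k] {n : ℕ} {I K : Ideal (MvPolynomial (Fin n) k)}

lemma aux_B_bot (hI : IsMonomialIdeal I) (hIK : I ≤ K)
    {ζ : Set (Fin n →₀ ℕ)}
    (hζ : ζ = {a | monomial a (1 : k) ∈ K ∧ monomial a (1 : k) ∉ I})
    {τ : Set (Fin n →₀ ℕ)} {v : Fin n →₀ ℕ} (hv : v ∈ ζ)
    (hτ : τ = {w ∈ ζ | ReachableExp ζ v w})
    {A B : Submodule (MvPolynomial (Fin n) k) (MvPolynomial (Fin n) k ⧸ I)}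
    (hA : IsMonomialSubmodule I A) (hB : IsMonomialSubmodule I B)
    (hsup : A ⊔ B = Submodule.span (MvPolynomial (Fin n) k)
      (I.mkQ '' ((fun a => monomial a (1 : k)) '' τ)))
    (hinf : A ⊓ B = ⊥)
    (hvA : I.mkQ (monomial v (1 : k)) ∈ A) : B = ⊥ := by
  have hτup : UpClosedMod I τ := comp_upClosed hIK hζ hτ
  set σA := {b : Fin n →₀ ℕ | I.mkQ (monomial b (1 : k)) ∈ A} with hσA
  set σB := {b : Fin n →₀ ℕ | I.mkQ (monomial b (1 : k)) ∈ B} with hσB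
  -- a ∈ τ implies its monomial is not in I
  have hτI : ∀ a ∈ τ, monomial a (1 : k) ∉ I := fun a ha => (hζ ▸ (hτ ▸ ha).1).2
  -- A ⊔ B as a span
  have hsupspan : A ⊔ B = Submodule.span (MvPolynomial (Fin n) k)
      (I.mkQ '' ((fun a => monomial a (1 : k)) '' (σA ∪ σB))) := by
    conv_lhs => rw [monSubmodule_eq hA, monSubmodule_eq hB]
    rw [← Submodule.span_union, ← Set.image_union, ← Set.image_union]
  -- every monomial of τ lies in A or in B
  have claim1 : ∀ a ∈ τ, I.mkQ (monomial a (1 : k)) ∈ A ∨ I.mkQ (monomial a (1 : k)) ∈ B := by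
    intro a ha
    have hmem : I.mkQ (monomial a (1 : k)) ∈ A ⊔ B := by
      rw [hsup]
      exact Submodule.subset_span ⟨monomial a 1, ⟨a, ha, rfl⟩, rfl⟩
    rw [hsupspan] at hmem
    exact exponent_mem_of_mem hI (upClosedMod_union monSubmodule_upClosed monSubmodule_upClosed)
      (hτI a ha) hmem
  -- not both
  have hnotboth : ∀ a ∈ τ, I.mkQ (monomial a (1 : k)) ∈ A →
      I.mkQ (monomial a (1 : k)) ∈ B → False := by
    intro a ha h1 h2
    have : I.mkQ (monomial a (1 : k)) ∈ A ⊓ B := ⟨h1, h2⟩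
    rw [hinf, Submodule.mem_bot, Submodule.mkQ_apply, Submodule.Quotient.mk_eq_zero] at this
    exact hτI a ha this
  -- step closure of σA inside τ
  have hstepA : ∀ a ∈ τ, ∀ b ∈ τ, IsStepExp a b → a ∈ σA → b ∈ σA := by
    rintro a ha b hb ⟨i, hi | hi⟩ haA
    · exact hi ▸ smul_mon_mem haA i
    · rcases claim1 b hb with h | h
      · exact h
      · exact absurd (hi ▸ smul_mon_mem h i : I.mkQ (monomial a (1:k)) ∈ B)
          (fun hB' => hnotboth a ha haA hB')
  -- every exponent of τ is in σA
  have hwalk : ∀ w ∈ τ, w ∈ σA := by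
    intro w hw
    obtain ⟨hwζ, m, f, h0, hm, hmem, hstep⟩ := hτ ▸ hw
    have key : ∀ i ≤ m, f i ∈ σA := by
      intro i hi
      induction i with
      | zero => exact h0 ▸ hvA
      | succ i ih =>
          have hfi : f i ∈ τ := by
            rw [hτ]
            exact ⟨hmem i (by omega), h0 ▸ reach_of_path hmem hstep (by omega)⟩
          have hfi1 : f (i+1) ∈ τ := by
            rw [hτ]
            exact ⟨hmem (i+1) hi, h0 ▸ reach_of_path hmem hstep hi⟩
          exact hstepA _ hfi _ hfi1 (hstep i (by omega)) (ih (by omega))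
    exact hm ▸ key m le_rfl
  -- conclude B = ⊥
  rw [monSubmodule_eq hB, Submodule.span_eq_bot]
  rintro x ⟨-, ⟨b, hb, rfl⟩, rfl⟩
  by_cases hbI : monomial b (1 : k) ∈ I
  · rw [Submodule.mkQ_apply, Submodule.Quotient.mk_eq_zero]; exact hbI
  · exfalso
    have hbτ : b ∈ τ := by
      refine exponent_mem_of_mem hI hτup hbI ?_
      rw [← hsup]
      exact (le_sup_right : B ≤ A ⊔ B) hb
    exact hnotboth b hbτ (hwalk b hbτ) hb
end Alg4

section Alg5
variable {k : Type} [Field k] {n : ℕ} {I : Ideal (MvPolynomial (Fin n) k)}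

lemma mon_mem_or (hI : IsMonomialIdeal I)
    {A B : Submodule (MvPolynomial (Fin n) k) (MvPolynomial (Fin n) k ⧸ I)}
    (hA : IsMonomialSubmodule I A) (hB : IsMonomialSubmodule I B)
    {a : Fin n →₀ ℕ} (ha : monomial a (1 : k) ∉ I)
    (h : I.mkQ (monomial a (1 : k)) ∈ A ⊔ B) :
    I.mkQ (monomial a (1 : k)) ∈ A ∨ I.mkQ (monomial a (1 : k)) ∈ B := by
  rw [show A ⊔ B = Submodule.span (MvPolynomial (Fin n) k)
      (I.mkQ '' ((fun a => monomial a (1 : k)) ''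
        ({b : Fin n →₀ ℕ | I.mkQ (monomial b (1 : k)) ∈ A} ∪
          {b : Fin n →₀ ℕ | I.mkQ (monomial b (1 : k)) ∈ B}))) by
      conv_lhs => rw [monSubmodule_eq hA, monSubmodule_eq hB]
      rw [← Submodule.span_union, ← Set.image_union, ← Set.image_union]] at h
  exact exponent_mem_of_mem hI
    (upClosedMod_union monSubmodule_upClosed monSubmodule_upClosed) ha h
end Alg5

theorem graded_indecomposable_decomposition
    {k : Type} [Field k] {n : ℕ}
    (I K : Ideal (MvPolynomial (Fin n) k))
    (hIK : I ≤ K) (hI : IsMonomialIdeal I) (hK : IsMonomialIdeal K)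
    (hIfin : Module.Finite k (MvPolynomial (Fin n) k ⧸ I))
    (hKfin : Module.Finite k (MvPolynomial (Fin n) k ⧸ K))
    -- the skew shape of `K/I`
    (ζ : Set (Fin n →₀ ℕ))
    (hζ : ζ = {a | monomial a (1 : k) ∈ K ∧ monomial a (1 : k) ∉ I})
    -- its connected components `ζ₁, …, ζ_ℓ`
    (ℓ : ℕ) (ζc : Fin ℓ → Set (Fin n →₀ ℕ))
    (hcomp : ∀ j, IsConnCompExp ζ (ζc j))
    (hinj : Function.Injective ζc)
    (hcover : (⋃ j, ζc j) = ζ)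
    -- `P j`: the span in `S/I` of the monomials with exponents in `ζ j`
    (P : Fin ℓ → Submodule (MvPolynomial (Fin n) k) (MvPolynomial (Fin n) k ⧸ I))
    (hP : ∀ j, P j = Submodule.span (MvPolynomial (Fin n) k)
      (I.mkQ '' ((fun a => monomial a (1 : k)) '' ζc j))) :
    -- each `P j` coincides with the k-span of those monomials
    (∀ j, (P j : Set (MvPolynomial (Fin n) k ⧸ I)) =
      (Submodule.span k (I.mkQ '' ((fun a => monomial a (1 : k)) '' ζc j)) :
        Submodule k (MvPolynomial (Fin n) k ⧸ I))) ∧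
    -- `K/I` is the (internal) direct sum of the `P j`
    iSupIndep P ∧
    (⨆ j, P j) = Submodule.map I.mkQ (K : Submodule (MvPolynomial (Fin n) k)
      (MvPolynomial (Fin n) k)) ∧
    -- and each `P j` is indecomposable as an ℕⁿ-graded S-module
    (∀ j, ∀ A B : Submodule (MvPolynomial (Fin n) k) (MvPolynomial (Fin n) k ⧸ I),
      IsMonomialSubmodule I A → IsMonomialSubmodule I B →
      A ⊔ B = P j → A ⊓ B = ⊥ → A = ⊥ ∨ B = ⊥) := by
  have hup : ∀ j, UpClosedMod I (ζc j) := fun j => by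
    obtain ⟨v, hv, hτ⟩ := hcomp j
    exact comp_upClosed hIK hζ hτ
  -- Conjunct 1
  have c1 : ∀ j, (P j : Set (MvPolynomial (Fin n) k ⧸ I)) =
      (Submodule.span k (I.mkQ '' ((fun a => monomial a (1 : k)) '' ζc j)) :
        Submodule k (MvPolynomial (Fin n) k ⧸ I)) := by
    intro j
    ext x
    rw [SetLike.mem_coe, SetLike.mem_coe, hP j, mem_sspan_iff hI (hup j),
      mem_kspan_iff hI]
  -- component disjointness
  have hdisj : ∀ i j, i ≠ j → ∀ a, a ∈ ζc i → a ∈ ζc j → False := by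
    intro i j hij a hai haj
    obtain ⟨vi, hvi, hti⟩ := hcomp i
    obtain ⟨vj, hvj, htj⟩ := hcomp j
    apply hij
    apply hinj
    have hri : ReachableExp ζ vi a := (hti ▸ hai).2
    have hrj : ReachableExp ζ vj a := (htj ▸ haj).2
    rw [hti, htj]
    ext w
    simp only [Set.mem_setOf_eq]
    constructor
    · rintro ⟨hwζ, hw⟩
      exact ⟨hwζ, reach_trans (reach_trans hrj (reach_symm hri)) hw⟩
    · rintro ⟨hwζ, hw⟩
      exact ⟨hwζ, reach_trans (reach_trans hri (reach_symm hrj)) hw⟩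
  -- Conjunct 2
  have c2 : iSupIndep P := by
    intro i
    rw [Submodule.disjoint_def]
    intro x hxi hxrest
    set U := ⋃ (j : Fin ℓ) (_ : j ≠ i), ζc j with hU
    have hUup : UpClosedMod I U := by
      intro a ha l
      simp only [hU, Set.mem_iUnion] at ha
      obtain ⟨j, hji, haj⟩ := ha
      rcases hup j a haj l with h | h
      · exact Or.inl h
      · exact Or.inr (by simp only [hU, Set.mem_iUnion]; exact ⟨j, hji, h⟩)
    have hle : (⨆ j, ⨆ (_ : j ≠ i), P j) ≤ Submodule.span (MvPolynomial (Fin n) k)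
        (I.mkQ '' ((fun a => monomial a (1 : k)) '' U)) := by
      refine iSup_le fun j => iSup_le fun hji => ?_
      rw [hP j]
      refine Submodule.span_mono (Set.image_mono (Set.image_mono ?_))
      intro a ha
      simp only [hU, Set.mem_iUnion]
      exact ⟨j, hji, ha⟩
    obtain ⟨p, hpx, hp⟩ := (mem_sspan_iff hI (hup i) x).1 (by rw [← hP i]; exact hxi)
    obtain ⟨q, hqx, hq⟩ := (mem_sspan_iff hI hUup x).1 (hle hxrest)
    have hpq : p - q ∈ I := by
      rw [← hqx] at hpx
      rwa [Submodule.mkQ_apply, Submodule.mkQ_apply, Submodule.Quotient.eq] at hpx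
    have hpI : p ∈ I := by
      rw [mem_monIdeal_iff hI]
      intro a ha
      by_contra haI
      have h1 : a ∈ ζc i := (hp a ha).resolve_right haI
      have hca : coeff a q ≠ 0 := by
        rw [← coeff_eq_of_sub_mem hI hpq haI]
        exact mem_support_iff.1 ha
      have h2 : a ∈ U := (hq a (mem_support_iff.2 hca)).resolve_right haI
      simp only [hU, Set.mem_iUnion] at h2
      obtain ⟨j, hji, haj⟩ := h2
      exact hdisj j i hji a haj h1
    rw [← hpx, Submodule.mkQ_apply, Submodule.Quotient.mk_eq_zero]
    exact hpI
  -- Conjunct 3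
  have hζup : UpClosedMod I ζ := by
    intro a ha i
    by_cases h : monomial (a + Finsupp.single i 1) (1 : k) ∈ I
    · exact Or.inl h
    · exact Or.inr (hζ ▸ ⟨mon_up_mem (hζ ▸ ha).1 i, h⟩)
  have c3 : (⨆ j, P j) = Submodule.map I.mkQ (K : Submodule (MvPolynomial (Fin n) k)
      (MvPolynomial (Fin n) k)) := by
    apply le_antisymm
    · refine iSup_le fun j => ?_
      rw [hP j]
      refine Submodule.span_le.2 ?_
      rintro x ⟨-, ⟨a, ha, rfl⟩, rfl⟩
      have haζ : a ∈ ζ := hcover ▸ Set.mem_iUnion.2 ⟨j, ha⟩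
      exact ⟨monomial a 1, (hζ ▸ haζ).1, rfl⟩
    · rintro x ⟨p, hpK, rfl⟩
      have hx : I.mkQ p ∈ Submodule.span (MvPolynomial (Fin n) k)
          (I.mkQ '' ((fun a => monomial a (1 : k)) '' ζ)) := by
        refine (mem_sspan_iff hI hζup _).2 ⟨p, rfl, fun a ha => ?_⟩
        have haK := (mem_monIdeal_iff hK p).1 hpK a ha
        by_cases h : monomial a (1 : k) ∈ I
        · exact Or.inr h
        · exact Or.inl (hζ ▸ ⟨haK, h⟩)
      rw [← hcover, Set.image_iUnion, Set.image_iUnion, Submodule.span_iUnion] at hx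
      have heq : (⨆ j, Submodule.span (MvPolynomial (Fin n) k)
          (I.mkQ '' ((fun a => monomial a (1 : k)) '' ζc j))) = ⨆ j, P j :=
        iSup_congr fun j => (hP j).symm
      rw [heq] at hx
      exact hx
  refine ⟨c1, c2, c3, ?_⟩
  intro j A B hA hB hsup hinf
  obtain ⟨v, hv, hτ⟩ := hcomp j
  have hsup' : A ⊔ B = Submodule.span (MvPolynomial (Fin n) k)
      (I.mkQ '' ((fun a => monomial a (1 : k)) '' ζc j)) := by
    rw [hsup, hP j]
  have hvτ : v ∈ ζc j := hτ ▸ ⟨hv, reach_refl hv⟩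
  have hvI : monomial v (1 : k) ∉ I := (hζ ▸ hv).2
  have hvAB : I.mkQ (monomial v (1 : k)) ∈ A ⊔ B := by
    rw [hsup']
    exact Submodule.subset_span ⟨_, ⟨v, hvτ, rfl⟩, rfl⟩
  rcases mon_mem_or hI hA hB hvI hvAB with h | h
  · exact Or.inr (aux_B_bot hI hIK hζ hv hτ hA hB hsup' hinf h)
  · refine Or.inl (aux_B_bot hI hIK hζ hv hτ hB hA ?_ ?_ h)
    · rw [sup_comm]
      exact hsup'
    · rw [inf_comm]
      exact hinf
end
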